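/- The Jacobian matrix of F at the fixed point (0,0) has eigenvalues 1 and -1/2; in particular, (0,0) is a non-hyperbolic fixed point of F. -/

import Mathlib

noncomputable def Fop : ℝ × ℝ → ℝ × ℝ := fun p =>
  ((6*p.2 + 3*p.1 + 4*p.1*p.2)/(6 + 3*p.1),
   (3*p.1 + 4*p.1*p.2)/(6 + 6*p.2 + 3*p.1 + 4*p.1*p.2))

def Dset : Set (ℝ × ℝ) := {p | 0 ≤ p.1 ∧ p.1 ≤ 4 ∧ 0 ≤ p.2 ∧ p.2 ≤ 1}

lemma fop_d1 : DifferentiableAt ℝ (fun p : ℝ×ℝ => (Fop p).1) (0,0) := by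
  have h1 : DifferentiableAt ℝ (fun p:ℝ×ℝ => 6*p.2+3*p.1+4*p.1*p.2) (0,0) := by fun_prop
  have h2 : DifferentiableAt ℝ (fun p:ℝ×ℝ => 6+3*p.1) (0,0) := by fun_prop
  simp only [Fop, div_eq_mul_inv]
  exact h1.mul (h2.inv (by norm_num))

lemma fop_d2 : DifferentiableAt ℝ (fun p : ℝ×ℝ => (Fop p).2) (0,0) := by
  have h1 : DifferentiableAt ℝ (fun p:ℝ×ℝ => 3*p.1+4*p.1*p.2) (0,0) := by fun_prop
  have h2 : DifferentiableAt ℝ (fun p:ℝ×ℝ => 6+6*p.2+3*p.1+4*p.1*p.2) (0,0) := by fun_prop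
  simp only [Fop, div_eq_mul_inv]
  exact h1.mul (h2.inv (by norm_num))

lemma e11 : fderiv ℝ (fun p => (Fop p).1) ((0:ℝ), (0:ℝ)) (1, 0) = 1/2 := by
  rw [← fop_d1.lineDeriv_eq_fderiv]
  unfold lineDeriv
  have h : (fun t : ℝ => Fop ((0,0) + t • ((1:ℝ),(0:ℝ))) |>.1) = fun t => (3*t)/(6+3*t) := by
    funext t; simp [Fop]
  rw [h]
  have H := ((hasDerivAt_id (0:ℝ)).const_mul 3).div
      ((hasDerivAt_const (0:ℝ) (6:ℝ)).add ((hasDerivAt_id (0:ℝ)).const_mul 3)) (by norm_num)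
  simp only [id_eq, Pi.div_def, Pi.add_def] at H
  rw [H.deriv]
  norm_num

lemma e12 : fderiv ℝ (fun p => (Fop p).1) ((0:ℝ), (0:ℝ)) (0, 1) = 1 := by
  rw [← fop_d1.lineDeriv_eq_fderiv]
  unfold lineDeriv
  have h : (fun t : ℝ => Fop ((0,0) + t • ((0:ℝ),(1:ℝ))) |>.1) = fun t => t := by
    funext t; simp [Fop]
  rw [h]
  simp

lemma e21 : fderiv ℝ (fun p => (Fop p).2) ((0:ℝ), (0:ℝ)) (1, 0) = 1/2 := by
  rw [← fop_d2.lineDeriv_eq_fderiv]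
  unfold lineDeriv
  have h : (fun t : ℝ => Fop ((0,0) + t • ((1:ℝ),(0:ℝ))) |>.2) = fun t => (3*t)/(6+3*t) := by
    funext t; simp [Fop]
  rw [h]
  have H := ((hasDerivAt_id (0:ℝ)).const_mul 3).div
      ((hasDerivAt_const (0:ℝ) (6:ℝ)).add ((hasDerivAt_id (0:ℝ)).const_mul 3)) (by norm_num)
  simp only [id_eq, Pi.div_def, Pi.add_def] at H
  rw [H.deriv]
  norm_num

lemma e22 : fderiv ℝ (fun p => (Fop p).2) ((0:ℝ), (0:ℝ)) (0, 1) = 0 := by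
  rw [← fop_d2.lineDeriv_eq_fderiv]
  unfold lineDeriv
  have h : (fun t : ℝ => Fop ((0,0) + t • ((0:ℝ),(1:ℝ))) |>.2) = fun _ => (0:ℝ) := by
    funext t; simp [Fop]
  rw [h]
  simp

lemma eig (μ : ℝ) :
    Module.End.HasEigenvalue (Matrix.toLin' !![(1:ℝ)/2, 1; 1/2, 0]) μ ↔ μ = 1 ∨ μ = -1/2 := by
  constructor
  · intro h
    obtain ⟨v, hv⟩ := h.exists_hasEigenvector
    have happ := hv.apply_eq_smul
    rw [Matrix.toLin'_apply] at happ
    have e0 := congr_fun happ 0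
    have e1 := congr_fun happ 1
    simp [Matrix.mulVec, dotProduct, Fin.sum_univ_two, Matrix.vecHead, Matrix.vecTail] at e0 e1
    have hv1 : v 1 ≠ 0 := by
      intro h1
      have hv0 : v 0 = 0 := by
        rw [h1] at e1; nlinarith [e1]
      exact hv.right (by funext i; fin_cases i <;> simp [hv0, h1])
    have key : (μ - 1) * (2*μ + 1) = 0 := by
      have hv0 : v 0 = 2 * μ * v 1 := by nlinarith [e1]
      rw [hv0] at e0
      have : (2*μ^2 - μ - 1) * v 1 = 0 := by nlinarith [e0]
      have h2 : 2*μ^2 - μ - 1 = 0 := by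
        rcases mul_eq_zero.mp this with h | h
        · exact h
        · exact absurd h hv1
      nlinarith [h2]
    rcases mul_eq_zero.mp key with h | h
    · left; linarith
    · right; linarith
  · rintro (rfl | rfl)
    · apply Module.End.hasEigenvalue_of_hasEigenvector (x := ![2,1])
      refine ⟨Module.End.mem_eigenspace_iff.mpr ?_, ?_⟩
      · rw [Matrix.toLin'_apply]
        funext i
        fin_cases i <;> simp [Matrix.mulVec, dotProduct, Fin.sum_univ_two] <;> norm_num
      · intro h
        have := congr_fun h 0
        norm_num at this
    · apply Module.End.hasEigenvalue_of_hasEigenvector (x := ![1,-1])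
      refine ⟨Module.End.mem_eigenspace_iff.mpr ?_, ?_⟩
      · rw [Matrix.toLin'_apply]
        funext i
        fin_cases i <;> simp [Matrix.mulVec, dotProduct, Fin.sum_univ_two] <;> norm_num
      · intro h
        have := congr_fun h 0
        norm_num at this

theorem stmt13 :
    let J : Matrix (Fin 2) (Fin 2) ℝ :=
      Matrix.of ![![fderiv ℝ (fun p => (Fop p).1) (0, 0) (1, 0),
                    fderiv ℝ (fun p => (Fop p).1) (0, 0) (0, 1)],
                  ![fderiv ℝ (fun p => (Fop p).2) (0, 0) (1, 0),
                    fderiv ℝ (fun p => (Fop p).2) (0, 0) (0, 1)]]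
    (∀ μ : ℝ, Module.End.HasEigenvalue (Matrix.toLin' J) μ ↔ μ = 1 ∨ μ = -1/2) ∧
    (∃ μ : ℝ, Module.End.HasEigenvalue (Matrix.toLin' J) μ ∧ |μ| = 1) := by
  intro J
  have hJ : J = !![(1:ℝ)/2, 1; 1/2, 0] := by
    funext i j
    fin_cases i <;> fin_cases j
    · simpa [J] using e11
    · simpa [J] using e12
    · simpa [J] using e21
    · simpa [J] using e22
  rw [hJ]
  refine ⟨fun μ => eig μ, 1, (eig 1).mpr (Or.inl rfl), by norm_num⟩
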